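/- The torsion of the normalized set-theoretic Yang–Baxter cohomology of the cyclic biquandle C_m obeys the same annihilation bounds as the full cohomology: for every normalized n-cocycle f : (ℤ/mℤ)^n → ℤ (i.e. δ^n f = 0 and f vanishes on all degenerate tuples) such that δ^{n−1} g = k·f for some k ≥ 1 and some normalized (n−1)-cochain g, there exists a normalized (n−1)-cochain h with δ^{n−1} h = m·f if m is odd, and with δ^{n−1} h = 2m·f if m is even. -/
import Mathlib


/-- The `i`-th left face map of the set-theoretic Yang–Baxter (co)chain complex of the
cyclic biquandle `C_m = ℤ/mℤ` (with `R(a,b) = (b+1, a-1)`): it drops the `i`-th coordinate,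
subtracting `1` from all earlier coordinates. -/
def dl (m n : ℕ) (i : Fin (n + 1)) (x : Fin (n + 1) → ZMod m) : Fin n → ZMod m :=
  fun j => if (j : ℕ) < (i : ℕ) then x j.castSucc - 1 else x j.succ

/-- The `i`-th right face map: it drops the `i`-th coordinate, adding `1` to all later
coordinates. -/
def dr (m n : ℕ) (i : Fin (n + 1)) (x : Fin (n + 1) → ZMod m) : Fin n → ZMod m :=
  fun j => if (j : ℕ) < (i : ℕ) then x j.castSucc else x j.succ + 1

/-- The Yang–Baxter coboundary `δⁿ` of the cyclic biquandle `C_m` with coefficients in an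
abelian group `A`:
`(δⁿ f)(x₁,…,x_{n+1}) = Σᵢ (−1)^{i−1} [f(x₁−1,…,x_{i−1}−1,x_{i+1},…) − f(x₁,…,x_{i−1},x_{i+1}+1,…)]`. -/
def delta {A : Type*} [AddCommGroup A] (m n : ℕ) (f : (Fin n → ZMod m) → A) :
    (Fin (n + 1) → ZMod m) → A :=
  fun x => ∑ i : Fin (n + 1), (-1 : ℤ) ^ (i : ℕ) • (f (dl m n i x) - f (dr m n i x))

/-- The diagonal shift operator `S` on cochains: `(Sf)(x₁,…,x_k) = f(x₁−1,…,x_k−1)`. -/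
def shiftC {A : Type*} (m k : ℕ) (f : (Fin k → ZMod m) → A) : (Fin k → ZMod m) → A :=
  fun x => f fun j => x j - 1

/-- A tuple `(x₁,…,x_k)` in `(ℤ/m)^k` is degenerate if `x_i = x_{i+1} + 1` for some pair of
consecutive indices (these are the fixed points of the Yang–Baxter operator
`R(a,b) = (b+1, a−1)`). -/
def IsDeg (m k : ℕ) (x : Fin k → ZMod m) : Prop :=
  ∃ i j : Fin k, (j : ℕ) = (i : ℕ) + 1 ∧ x i = x j + 1

/-- A cochain is normalized if it vanishes on all degenerate tuples. -/
def Normalized (m k : ℕ) (f : (Fin k → ZMod m) → ℤ) : Prop :=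
  ∀ x, IsDeg m k x → f x = 0

/-- The left-face part of the coboundary. -/
def pdl (m n : ℕ) (f : (Fin n → ZMod m) → ℤ) : (Fin (n + 1) → ZMod m) → ℤ :=
  fun x => ∑ i : Fin (n + 1), (-1 : ℤ) ^ (i : ℕ) * f (dl m n i x)

lemma dl_shift (m n : ℕ) (i : Fin (n + 1)) (x : Fin (n + 1) → ZMod m) (c : ZMod m) :
    dl m n i (fun j => x j + c) = fun j => dl m n i x j + c := by
  funext j; unfold dl; split <;> ring

lemma dr_eq (m n : ℕ) (i : Fin (n + 1)) (x : Fin (n + 1) → ZMod m) :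
    dr m n i x = dl m n i (fun j => x j + 1) := by
  funext j; unfold dl dr; split <;> ring

lemma delta_eq (m n : ℕ) (f : (Fin n → ZMod m) → ℤ) :
    delta m n f = fun x => pdl m n f x - pdl m n f (fun j => x j + 1) := by
  funext x
  unfold delta pdl
  rw [← Finset.sum_sub_distrib]
  refine Finset.sum_congr rfl fun i _ => ?_
  rw [dr_eq, smul_eq_mul]
  ring

lemma pdl_shift (m n : ℕ) (c : ZMod m) (f : (Fin n → ZMod m) → ℤ)
    (x : Fin (n + 1) → ZMod m) :
    pdl m n (fun y => f (fun j => y j + c)) x = pdl m n f (fun j => x j + c) := by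
  unfold pdl
  refine Finset.sum_congr rfl fun i _ => ?_
  rw [dl_shift]

lemma pdl_comb (m n : ℕ) {ι : Type*} (s : Finset ι) (c : ι → ℤ)
    (F : ι → (Fin n → ZMod m) → ℤ) :
    pdl m n (fun x => ∑ i ∈ s, c i * F i x) = fun x => ∑ i ∈ s, c i * pdl m n (F i) x := by
  funext x
  unfold pdl
  simp only [Finset.mul_sum]
  rw [Finset.sum_comm]
  exact Finset.sum_congr rfl fun j _ => Finset.sum_congr rfl fun i _ => by ring

lemma delta_comb (m n : ℕ) {ι : Type*} (s : Finset ι) (c : ι → ℤ)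
    (F : ι → (Fin n → ZMod m) → ℤ) :
    delta m n (fun x => ∑ i ∈ s, c i * F i x) = fun x => ∑ i ∈ s, c i * delta m n (F i) x := by
  funext x
  rw [delta_eq, pdl_comb]
  simp only
  rw [← Finset.sum_sub_distrib]
  refine Finset.sum_congr rfl fun i _ => ?_
  rw [delta_eq]
  ring

lemma pdl_sub (m n : ℕ) (f g : (Fin n → ZMod m) → ℤ) :
    pdl m n (fun x => f x - g x) = fun x => pdl m n f x - pdl m n g x := by
  funext x
  unfold pdl
  rw [← Finset.sum_sub_distrib]
  exact Finset.sum_congr rfl fun i _ => by ring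

lemma delta_sub (m n : ℕ) (f g : (Fin n → ZMod m) → ℤ) :
    delta m n (fun x => f x - g x) = fun x => delta m n f x - delta m n g x := by
  funext x
  rw [delta_eq, pdl_sub]
  simp only
  rw [delta_eq, delta_eq]
  ring

lemma pdl_smul (m n : ℕ) (c : ℤ) (f : (Fin n → ZMod m) → ℤ) :
    pdl m n (fun x => c * f x) = fun x => c * pdl m n f x := by
  funext x
  unfold pdl
  rw [Finset.mul_sum]
  exact Finset.sum_congr rfl fun i _ => by ring

lemma delta_smul (m n : ℕ) (c : ℤ) (f : (Fin n → ZMod m) → ℤ) :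
    delta m n (fun x => c * f x) = fun x => c * delta m n f x := by
  funext x
  rw [delta_eq, pdl_smul]
  simp only
  rw [delta_eq]
  ring

lemma dl_cons_zero (m n : ℕ) (a : ZMod m) (x : Fin (n + 1) → ZMod m) :
    dl m (n + 1) 0 (Fin.cons a x) = x := by
  funext j
  unfold dl
  simp [Fin.cons_succ]

lemma dl_cons_succ (m n : ℕ) (t : Fin (n + 1)) (a : ZMod m) (x : Fin (n + 1) → ZMod m) :
    dl m (n + 1) t.succ (Fin.cons a x) = Fin.cons (a - 1) (dl m n t x) := by
  funext j
  refine Fin.cases ?_ ?_ j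
  · unfold dl
    simp [Fin.cons_zero]
  · intro s
    unfold dl
    simp only [Fin.cons_succ, Fin.val_succ]
    by_cases hst : (s : ℕ) < (t : ℕ)
    · rw [if_pos (by omega), if_pos hst, ← Fin.succ_castSucc, Fin.cons_succ]
    · rw [if_neg (by omega), if_neg hst]

lemma pdl_cons (m n : ℕ) (χ : (Fin (n + 1) → ZMod m) → ℤ) (a : ZMod m)
    (x : Fin (n + 1) → ZMod m) :
    pdl m (n + 1) χ (Fin.cons a x) =
      χ x - pdl m n (fun y => χ (Fin.cons (a - 1) y)) x := by
  unfold pdl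
  rw [Fin.sum_univ_succ, dl_cons_zero]
  simp only [Fin.val_zero, pow_zero, one_mul, Fin.val_succ]
  rw [sub_eq_add_neg, ← Finset.sum_neg_distrib]
  congr 1
  refine Finset.sum_congr rfl fun t _ => ?_
  rw [dl_cons_succ, pow_succ]
  ring

lemma pdl_cons_eq (m n : ℕ) (χ : (Fin (n + 1) → ZMod m) → ℤ)
    (hχ : pdl m (n + 1) χ = 0) (b : ZMod m) :
    pdl m n (fun y => χ (Fin.cons b y)) = χ := by
  funext x
  have h := pdl_cons m n χ (b + 1) x
  rw [hχ] at h
  simp only [Pi.zero_apply, add_sub_cancel_right] at h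
  linarith

lemma delta_cons (m n : ℕ) (χ : (Fin (n + 1) → ZMod m) → ℤ)
    (hχ : pdl m (n + 1) χ = 0) (b : ZMod m) :
    delta m n (fun y => χ (Fin.cons b y)) = fun x => χ x - χ (fun j => x j + 1) := by
  rw [delta_eq, pdl_cons_eq m n χ hχ b]

lemma isDeg_shift (m k : ℕ) (x : Fin k → ZMod m) (c : ZMod m) (h : IsDeg m k x) :
    IsDeg m k (fun j => x j + c) := by
  obtain ⟨i, j, hij, hx⟩ := h
  exact ⟨i, j, hij, by simp only []; rw [hx]; ring⟩

lemma isDeg_cons (m k : ℕ) (b : ZMod m) (x : Fin k → ZMod m) (h : IsDeg m k x) :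
    IsDeg m (k + 1) (Fin.cons b x) := by
  obtain ⟨i, j, hij, hx⟩ := h
  exact ⟨i.succ, j.succ, by simp [Fin.val_succ, hij], by simp [Fin.cons_succ, hx]⟩

lemma abel_sum (F : ℕ → ℤ) (s : ℕ) :
    ∑ i ∈ Finset.range s, ((s - i : ℕ) : ℤ) * (F i - F (i + 1)) =
      ((s : ℤ) + 1) * F 0 - ∑ i ∈ Finset.range (s + 1), F i := by
  induction s with
  | zero => simp
  | succ s ih =>
    have h1 : ∀ i ∈ Finset.range (s + 1),
        ((s + 1 - i : ℕ) : ℤ) * (F i - F (i + 1)) =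
          ((s - i : ℕ) : ℤ) * (F i - F (i + 1)) + (F i - F (i + 1)) := by
      intro i hi
      rw [Finset.mem_range] at hi
      rw [show s + 1 - i = (s - i) + 1 by omega]
      push_cast
      ring
    rw [Finset.sum_congr rfl h1, Finset.sum_add_distrib, Finset.sum_range_sub' F,
      Finset.sum_range_succ (fun i => ((s - i : ℕ) : ℤ) * (F i - F (i + 1))), Nat.sub_self,
      ih, Finset.sum_range_succ F (s + 1)]
    push_cast
    ring

lemma gauss_sum (s : ℕ) :
    2 * ∑ i ∈ Finset.range s, ((s - i : ℕ) : ℤ) = (s : ℤ) * ((s : ℤ) + 1) := by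
  induction s with
  | zero => simp
  | succ s ih =>
    have h1 : ∀ i ∈ Finset.range (s + 1),
        ((s + 1 - i : ℕ) : ℤ) = ((s - i : ℕ) : ℤ) + 1 := by
      intro i hi
      rw [Finset.mem_range] at hi
      rw [show s + 1 - i = (s - i) + 1 by omega]
      push_cast
      ring
    rw [Finset.sum_congr rfl h1, Finset.sum_add_distrib,
      Finset.sum_range_succ (fun i => ((s - i : ℕ) : ℤ)), Nat.sub_self]
    simp only [Finset.sum_const, Finset.card_range, nsmul_eq_mul, Nat.cast_zero, add_zero]
    push_cast
    linarith

lemma delta_shift (m n : ℕ) (c : ZMod m) (f : (Fin n → ZMod m) → ℤ)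
    (x : Fin (n + 1) → ZMod m) :
    delta m n (fun y => f (fun j => y j + c)) x = delta m n f (fun j => x j + c) := by
  rw [delta_eq, delta_eq]
  simp only [pdl_shift]
  congr 2
  funext j
  ring

lemma shift_succ (m k' : ℕ) (x : Fin k' → ZMod m) (i : ℕ) :
    (fun j => (x j + 1) + ((i : ℕ) : ZMod m)) = fun j => x j + (((i + 1 : ℕ)) : ZMod m) := by
  funext j; push_cast; ring

lemma shift_succ' (m k' : ℕ) (x : Fin k' → ZMod m) (i : ℕ) :
    (fun j => (x j + ((i : ℕ) : ZMod m)) + 1) = fun j => x j + (((i + 1 : ℕ)) : ZMod m) := by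
  funext j; push_cast; ring

lemma shift_zero (m k' : ℕ) (x : Fin k' → ZMod m) :
    (fun j => x j + (((0 : ℕ)) : ZMod m)) = x := by
  funext j; simp

lemma shift_m (m k' : ℕ) (x : Fin k' → ZMod m) :
    (fun j => x j + (((m : ℕ)) : ZMod m)) = x := by
  funext j; simp [ZMod.natCast_self]

lemma pdl_sum (m n : ℕ) {ι : Type*} (s : Finset ι) (F : ι → (Fin n → ZMod m) → ℤ) :
    pdl m n (fun x => ∑ i ∈ s, F i x) = fun x => ∑ i ∈ s, pdl m n (F i) x := by
  funext x
  unfold pdl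
  simp only [Finset.mul_sum]
  rw [Finset.sum_comm]

lemma delta_sum (m n : ℕ) {ι : Type*} (s : Finset ι) (F : ι → (Fin n → ZMod m) → ℤ) :
    delta m n (fun x => ∑ i ∈ s, F i x) = fun x => ∑ i ∈ s, delta m n (F i) x := by
  funext x
  rw [delta_eq, pdl_sum]
  simp only
  rw [← Finset.sum_sub_distrib]
  refine Finset.sum_congr rfl fun i _ => ?_
  rw [delta_eq]

/-- STATEMENT 17: the torsion of the normalized set-theoretic Yang–Baxter cohomology of the
cyclic biquandle `C_m` obeys the same annihilation bounds as the full cohomology: if `f` is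
a normalized integral `n`-cocycle and `δg = k·f` for some `k ≥ 1` and some normalized
`(n−1)`-cochain `g`, then there is a normalized `(n−1)`-cochain `h` with `δh = m·f` when `m`
is odd, and one with `δh = 2m·f` when `m` is even. (The degree `n ≥ 1` is realized as `n+1`
with `n : ℕ` arbitrary.) -/
theorem normalized_torsion_annihilation (m n : ℕ) (hm : 1 ≤ m)
    (f : (Fin (n + 1) → ZMod m) → ℤ) (hf : delta m (n + 1) f = 0)
    (hfN : Normalized m (n + 1) f)
    (k : ℕ) (hk : 1 ≤ k) (g : (Fin n → ZMod m) → ℤ) (hgN : Normalized m n g)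
    (hg : delta m n g = fun x => (k : ℤ) * f x) :
    (Odd m → ∃ h : (Fin n → ZMod m) → ℤ,
      Normalized m n h ∧ delta m n h = fun x => (m : ℤ) * f x) ∧
    (Even m → ∃ h : (Fin n → ZMod m) → ℤ,
      Normalized m n h ∧ delta m n h = fun x => 2 * (m : ℤ) * f x) := by
  -- the cochain ψ = (1 - T) f
  obtain ⟨ψ, hψdef⟩ : ∃ ψ' : (Fin (n + 1) → ZMod m) → ℤ,
      ψ' = fun x => f x - f (fun j => x j + 1) := ⟨_, rfl⟩
  -- ψ is a cocycle for the left-face coboundary ∂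
  have hψd : pdl m (n + 1) ψ = 0 := by
    rw [hψdef]
    funext x
    have h1 : pdl m (n + 1) (fun x => f x - f (fun j => x j + 1)) x =
        pdl m (n + 1) f x - pdl m (n + 1) (fun y => f (fun j => y j + 1)) x :=
      congrFun (pdl_sub m (n + 1) f (fun y => f (fun j => y j + 1))) x
    have h2 := pdl_shift m (n + 1) 1 f x
    have h3 : delta m (n + 1) f x =
        pdl m (n + 1) f x - pdl m (n + 1) f (fun j => x j + 1) :=
      congrFun (delta_eq m (n + 1) f) x
    rw [hf] at h3
    simp only [Pi.zero_apply] at h3 ⊢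
    rw [h1, h2]
    linarith [h3]
  -- ψ is normalized
  have hψN : Normalized m (n + 1) ψ := by
    intro x hx
    rw [hψdef]
    have h1 := hfN x hx
    have h2 := hfN _ (isDeg_shift m (n + 1) x 1 hx)
    simp only [h1, h2, sub_zero]
  -- Step 1 : N f = 0
  have hNf : ∀ x : Fin (n + 1) → ZMod m,
      ∑ i ∈ Finset.range m, f (fun j => x j + (i : ZMod m)) = 0 := by
    have E1 : delta m n
        (fun x => ∑ i ∈ Finset.range m, g (fun j => x j + (i : ZMod m))) =
        fun x => ∑ i ∈ Finset.range m,
          delta m n (fun y => g (fun j => y j + (i : ZMod m))) x :=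
      delta_sum m n (Finset.range m) (fun i => fun y => g (fun j => y j + (i : ZMod m)))
    have P1 : pdl m n
        (fun x => ∑ i ∈ Finset.range m, g (fun j => x j + (i : ZMod m))) =
        fun x => ∑ i ∈ Finset.range m,
          pdl m n (fun y => g (fun j => y j + (i : ZMod m))) x :=
      pdl_sum m n (Finset.range m) (fun i => fun y => g (fun j => y j + (i : ZMod m)))
    intro x
    have hL : delta m n
        (fun x => ∑ i ∈ Finset.range m, g (fun j => x j + (i : ZMod m))) x =
        (k : ℤ) * ∑ i ∈ Finset.range m, f (fun j => x j + (i : ZMod m)) := by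
      have e : delta m n
          (fun x => ∑ i ∈ Finset.range m, g (fun j => x j + (i : ZMod m))) x =
          ∑ i ∈ Finset.range m,
            delta m n (fun y => g (fun j => y j + (i : ZMod m))) x :=
        congrFun E1 x
      rw [e, Finset.mul_sum]
      refine Finset.sum_congr rfl fun i _ => ?_
      have h1 : delta m n (fun y => g (fun j => y j + (i : ZMod m))) x =
          delta m n g (fun j => x j + (i : ZMod m)) := delta_shift m n _ g x
      have h2 : delta m n g (fun j => x j + (i : ZMod m)) =
          (k : ℤ) * f (fun j => x j + (i : ZMod m)) := by rw [hg]
      rw [h1, h2]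
    have hR : delta m n
        (fun x => ∑ i ∈ Finset.range m, g (fun j => x j + (i : ZMod m))) x = 0 := by
      have e : delta m n
          (fun x => ∑ i ∈ Finset.range m, g (fun j => x j + (i : ZMod m))) x =
          pdl m n (fun x => ∑ i ∈ Finset.range m, g (fun j => x j + (i : ZMod m))) x -
          pdl m n (fun x => ∑ i ∈ Finset.range m, g (fun j => x j + (i : ZMod m)))
            (fun j => x j + 1) :=
        congrFun (delta_eq m n _) x
      have e1 : pdl m n (fun x => ∑ i ∈ Finset.range m, g (fun j => x j + (i : ZMod m))) x
          = ∑ i ∈ Finset.range m, pdl m n g (fun j => x j + (i : ZMod m)) := by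
        have := congrFun P1 x
        rw [this]
        exact Finset.sum_congr rfl fun i _ => pdl_shift m n _ g x
      have e2 : pdl m n (fun x => ∑ i ∈ Finset.range m, g (fun j => x j + (i : ZMod m)))
          (fun j => x j + 1)
          = ∑ i ∈ Finset.range m, pdl m n g (fun j => x j + ((i + 1 : ℕ) : ZMod m)) := by
        have := congrFun P1 (fun j => x j + 1)
        rw [this]
        refine Finset.sum_congr rfl fun i _ => ?_
        have h1 : pdl m n (fun y => g (fun j => y j + (i : ZMod m))) (fun j => x j + 1) =
            pdl m n g (fun j => (x j + 1) + (i : ZMod m)) := pdl_shift m n _ g _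
        rw [h1, shift_succ]
      have tele : ∑ i ∈ Finset.range m,
          (pdl m n g (fun j => x j + (i : ZMod m)) -
           pdl m n g (fun j => x j + ((i + 1 : ℕ) : ZMod m))) =
          pdl m n g (fun j => x j + ((0 : ℕ) : ZMod m)) -
          pdl m n g (fun j => x j + ((m : ℕ) : ZMod m)) :=
        Finset.sum_range_sub' (fun t => pdl m n g (fun j => x j + (t : ZMod m))) m
      rw [e, e1, e2, ← Finset.sum_sub_distrib, tele, shift_zero, shift_m, sub_self]
    have hk0 : (k : ℤ) ≠ 0 := by positivity
    have := hL.symm.trans hR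
    exact (mul_eq_zero.mp this).resolve_left hk0
  -- Step 2 : Abel summation, Q ψ = m f
  have hQ : ∀ x : Fin (n + 1) → ZMod m,
      ∑ i ∈ Finset.range (m - 1),
        ((m - 1 - i : ℕ) : ℤ) * ψ (fun j => x j + (i : ZMod m)) = (m : ℤ) * f x := by
    intro x
    have e : ∀ i ∈ Finset.range (m - 1),
        ((m - 1 - i : ℕ) : ℤ) * ψ (fun j => x j + (i : ZMod m)) =
        ((m - 1 - i : ℕ) : ℤ) *
          (f (fun j => x j + (i : ZMod m)) - f (fun j => x j + ((i + 1 : ℕ) : ZMod m))) := by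
      intro i _
      rw [hψdef]
      have h1 : (fun x => f x - f (fun j => x j + 1)) (fun j => x j + (i : ZMod m)) =
          f (fun j => x j + (i : ZMod m)) - f (fun j => (x j + (i : ZMod m)) + 1) := rfl
      rw [h1, shift_succ']
    have habel : ∑ i ∈ Finset.range (m - 1),
        ((m - 1 - i : ℕ) : ℤ) *
          (f (fun j => x j + (i : ZMod m)) - f (fun j => x j + ((i + 1 : ℕ) : ZMod m))) =
        (((m - 1 : ℕ) : ℤ) + 1) * f (fun j => x j + ((0 : ℕ) : ZMod m)) -
        ∑ i ∈ Finset.range (m - 1 + 1), f (fun j => x j + (i : ZMod m)) :=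
      abel_sum (fun t => f (fun j => x j + (t : ZMod m))) (m - 1)
    rw [Finset.sum_congr rfl e, habel, show m - 1 + 1 = m from by omega, hNf x,
      shift_zero, sub_zero, show ((m - 1 : ℕ) : ℤ) + 1 = (m : ℤ) from by omega]
  -- the primitive u of (1-T)ψ
  obtain ⟨u, hudef⟩ : ∃ u' : (Fin n → ZMod m) → ℤ,
      u' = fun y => ψ (Fin.cons 0 y) := ⟨_, rfl⟩
  have hδu : delta m n u = fun x => ψ x - ψ (fun j => x j + 1) := by
    rw [hudef]; exact delta_cons m n ψ hψd 0
  have huN : Normalized m n u := by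
    intro y hy; rw [hudef]
    exact hψN _ (isDeg_cons m n 0 y hy)
  -- v with δ v = m ψ
  obtain ⟨v, hvdef⟩ : ∃ v' : (Fin n → ZMod m) → ℤ,
      v' = fun x => ∑ i ∈ Finset.range (m - 1),
        ((m - 1 - i : ℕ) : ℤ) * u (fun j => x j + (i : ZMod m)) := ⟨_, rfl⟩
  have hvN : Normalized m n v := by
    intro x hx; rw [hvdef]
    refine Finset.sum_eq_zero fun i _ => ?_
    rw [huN _ (isDeg_shift m n x _ hx), mul_zero]
  have hδv : delta m n v = fun x => (m : ℤ) * ψ x := by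
    rw [hvdef]
    have E2 : delta m n (fun x => ∑ i ∈ Finset.range (m - 1),
        ((m - 1 - i : ℕ) : ℤ) * u (fun j => x j + (i : ZMod m))) =
        fun x => ∑ i ∈ Finset.range (m - 1),
          ((m - 1 - i : ℕ) : ℤ) *
            delta m n (fun y => u (fun j => y j + (i : ZMod m))) x :=
      delta_comb m n (Finset.range (m - 1)) (fun i => ((m - 1 - i : ℕ) : ℤ))
        (fun i => fun y => u (fun j => y j + (i : ZMod m)))
    rw [E2]
    funext x
    have e : ∀ i ∈ Finset.range (m - 1),
        ((m - 1 - i : ℕ) : ℤ) * delta m n (fun y => u (fun j => y j + (i : ZMod m))) x =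
        ((m - 1 - i : ℕ) : ℤ) *
          (ψ (fun j => x j + (i : ZMod m)) - ψ (fun j => x j + ((i + 1 : ℕ) : ZMod m))) := by
      intro i _
      have h1 : delta m n (fun y => u (fun j => y j + (i : ZMod m))) x =
          delta m n u (fun j => x j + (i : ZMod m)) := delta_shift m n _ u x
      have h2 : delta m n u (fun j => x j + (i : ZMod m)) =
          ψ (fun j => x j + (i : ZMod m)) - ψ (fun j => (x j + (i : ZMod m)) + 1) :=
        congrFun hδu _
      rw [h1, h2, shift_succ']
    have habel : ∑ i ∈ Finset.range (m - 1),
        ((m - 1 - i : ℕ) : ℤ) *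
          (ψ (fun j => x j + (i : ZMod m)) - ψ (fun j => x j + ((i + 1 : ℕ) : ZMod m))) =
        (((m - 1 : ℕ) : ℤ) + 1) * ψ (fun j => x j + ((0 : ℕ) : ZMod m)) -
        ∑ i ∈ Finset.range (m - 1 + 1), ψ (fun j => x j + (i : ZMod m)) :=
      abel_sum (fun t => ψ (fun j => x j + (t : ZMod m))) (m - 1)
    have tele : ∑ i ∈ Finset.range m, ψ (fun j => x j + (i : ZMod m)) = 0 := by
      have e2 : ∀ i ∈ Finset.range m, ψ (fun j => x j + (i : ZMod m)) =
          f (fun j => x j + (i : ZMod m)) - f (fun j => x j + ((i + 1 : ℕ) : ZMod m)) := by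
        intro i _
        rw [hψdef]
        have h1 : (fun x => f x - f (fun j => x j + 1)) (fun j => x j + (i : ZMod m)) =
            f (fun j => x j + (i : ZMod m)) - f (fun j => (x j + (i : ZMod m)) + 1) := rfl
        rw [h1, shift_succ']
      have t2 : ∑ i ∈ Finset.range m,
          (f (fun j => x j + (i : ZMod m)) - f (fun j => x j + ((i + 1 : ℕ) : ZMod m))) =
          f (fun j => x j + ((0 : ℕ) : ZMod m)) - f (fun j => x j + ((m : ℕ) : ZMod m)) :=
        Finset.sum_range_sub' (fun t => f (fun j => x j + (t : ZMod m))) m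
      rw [Finset.sum_congr rfl e2, t2, shift_zero, shift_m, sub_self]
    rw [Finset.sum_congr rfl e, habel, show m - 1 + 1 = m from by omega, tele, sub_zero,
      shift_zero, show ((m - 1 : ℕ) : ℤ) + 1 = (m : ℤ) from by omega]
  -- the ∂-cocycles χ i
  obtain ⟨χ, hχdef⟩ : ∃ χ' : ℕ → (Fin (n + 1) → ZMod m) → ℤ,
      χ' = fun i => fun z => ∑ j ∈ Finset.range i, ψ (fun l => z l + (j : ZMod m)) :=
    ⟨_, rfl⟩
  have hχd : ∀ i : ℕ, pdl m (n + 1) (χ i) = 0 := by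
    intro i
    rw [hχdef]
    funext x
    have h1 : pdl m (n + 1)
        (fun z => ∑ j ∈ Finset.range i, ψ (fun l => z l + (j : ZMod m))) x =
        ∑ j ∈ Finset.range i,
          pdl m (n + 1) (fun y => ψ (fun l => y l + (j : ZMod m))) x :=
      congrFun (pdl_sum m (n + 1) (Finset.range i)
        (fun j => fun y => ψ (fun l => y l + (j : ZMod m)))) x
    rw [h1]
    simp only [Pi.zero_apply]
    refine Finset.sum_eq_zero fun j _ => ?_
    have h2 : pdl m (n + 1) (fun y => ψ (fun l => y l + (j : ZMod m))) x =
        pdl m (n + 1) ψ (fun l => x l + (j : ZMod m)) := pdl_shift m (n + 1) _ ψ x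
    rw [h2, hψd]
    rfl
  have hχN : ∀ i : ℕ, Normalized m (n + 1) (χ i) := by
    intro i z hz
    rw [hχdef]
    exact Finset.sum_eq_zero fun j _ => hψN _ (isDeg_shift m (n + 1) z _ hz)
  -- D with δ D = c' ψ - m f
  obtain ⟨D, hDdef⟩ : ∃ D' : (Fin n → ZMod m) → ℤ,
      D' = fun x => ∑ i ∈ Finset.range (m - 1),
        ((m - 1 - i : ℕ) : ℤ) * χ i (Fin.cons 0 x) := ⟨_, rfl⟩
  have hDN : Normalized m n D := by
    intro x hx; rw [hDdef]
    refine Finset.sum_eq_zero fun i _ => ?_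
    rw [hχN i _ (isDeg_cons m n 0 x hx), mul_zero]
  have hδD : delta m n D = fun x =>
      (∑ i ∈ Finset.range (m - 1), ((m - 1 - i : ℕ) : ℤ)) * ψ x - (m : ℤ) * f x := by
    rw [hDdef]
    have E3 : delta m n (fun x => ∑ i ∈ Finset.range (m - 1),
        ((m - 1 - i : ℕ) : ℤ) * χ i (Fin.cons 0 x)) =
        fun x => ∑ i ∈ Finset.range (m - 1),
          ((m - 1 - i : ℕ) : ℤ) * delta m n (fun y => χ i (Fin.cons 0 y)) x :=
      delta_comb m n (Finset.range (m - 1)) (fun i => ((m - 1 - i : ℕ) : ℤ))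
        (fun i => fun y => χ i (Fin.cons 0 y))
    rw [E3]
    funext x
    have e : ∀ i ∈ Finset.range (m - 1),
        ((m - 1 - i : ℕ) : ℤ) * delta m n (fun y => χ i (Fin.cons 0 y)) x =
        ((m - 1 - i : ℕ) : ℤ) * (ψ x - ψ (fun j => x j + (i : ZMod m))) := by
      intro i _
      have h1 : delta m n (fun y => χ i (Fin.cons 0 y)) x =
          χ i x - χ i (fun j => x j + 1) :=
        congrFun (delta_cons m n (χ i) (hχd i) 0) x
      have h2 : χ i x - χ i (fun j => x j + 1) = ψ x - ψ (fun j => x j + (i : ZMod m)) := by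
        rw [hχdef]
        show (∑ j ∈ Finset.range i, ψ (fun l => x l + (j : ZMod m))) -
            (∑ j ∈ Finset.range i, ψ (fun l => (x l + 1) + (j : ZMod m))) =
            ψ x - ψ (fun j => x j + (i : ZMod m))
        have e2 : ∀ j ∈ Finset.range i, ψ (fun l => (x l + 1) + (j : ZMod m)) =
            ψ (fun l => x l + ((j + 1 : ℕ) : ZMod m)) := by
          intro j _; rw [shift_succ]
        have t2 : ∑ j ∈ Finset.range i,
            (ψ (fun l => x l + (j : ZMod m)) - ψ (fun l => x l + ((j + 1 : ℕ) : ZMod m))) =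
            ψ (fun l => x l + ((0 : ℕ) : ZMod m)) - ψ (fun l => x l + ((i : ℕ) : ZMod m)) :=
          Finset.sum_range_sub' (fun t => ψ (fun l => x l + (t : ZMod m))) i
        rw [Finset.sum_congr rfl e2, ← Finset.sum_sub_distrib, t2, shift_zero]
      rw [h1, h2]
    have split : ∑ i ∈ Finset.range (m - 1),
        ((m - 1 - i : ℕ) : ℤ) * (ψ x - ψ (fun j => x j + (i : ZMod m))) =
        (∑ i ∈ Finset.range (m - 1), ((m - 1 - i : ℕ) : ℤ)) * ψ x -
        ∑ i ∈ Finset.range (m - 1),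
          ((m - 1 - i : ℕ) : ℤ) * ψ (fun j => x j + (i : ZMod m)) := by
      simp only [mul_sub]
      rw [Finset.sum_sub_distrib, ← Finset.sum_mul]
    rw [Finset.sum_congr rfl e, split, hQ x]
  -- Gauss identity
  have hg2 : 2 * ∑ i ∈ Finset.range (m - 1), ((m - 1 - i : ℕ) : ℤ) =
      ((m : ℤ) - 1) * (m : ℤ) := by
    have h1 := gauss_sum (m - 1)
    have hc : ((m - 1 : ℕ) : ℤ) = (m : ℤ) - 1 := by omega
    rw [hc] at h1
    rw [h1]
    ring
  constructor
  · -- odd case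
    intro hodd
    obtain ⟨t, ht⟩ := hodd
    have hmz : (m : ℤ) = 2 * (t : ℤ) + 1 := by omega
    have hc' : ∑ i ∈ Finset.range (m - 1), ((m - 1 - i : ℕ) : ℤ) = (t : ℤ) * (m : ℤ) := by
      have h3 : 2 * ∑ i ∈ Finset.range (m - 1), ((m - 1 - i : ℕ) : ℤ) =
          2 * ((t : ℤ) * (m : ℤ)) := by rw [hg2, hmz]; ring
      linarith
    refine ⟨fun x => (t : ℤ) * v x - D x, ?_, ?_⟩
    · intro x hx
      simp only
      rw [hvN x hx, hDN x hx]
      ring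
    · have s1 : delta m n (fun x => (t : ℤ) * v x - D x) =
          fun x => delta m n (fun x => (t : ℤ) * v x) x - delta m n D x :=
        delta_sub m n (fun x => (t : ℤ) * v x) D
      have s2 : delta m n (fun x => (t : ℤ) * v x) = fun x => (t : ℤ) * delta m n v x :=
        delta_smul m n (t : ℤ) v
      funext x
      have d1 : delta m n (fun x => (t : ℤ) * v x - D x) x =
          delta m n (fun x => (t : ℤ) * v x) x - delta m n D x := congrFun s1 x
      have d2 : delta m n (fun x => (t : ℤ) * v x) x = (t : ℤ) * delta m n v x :=
        congrFun s2 x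
      have d3 : delta m n v x = (m : ℤ) * ψ x := congrFun hδv x
      have d4 : delta m n D x =
          (∑ i ∈ Finset.range (m - 1), ((m - 1 - i : ℕ) : ℤ)) * ψ x - (m : ℤ) * f x :=
        congrFun hδD x
      rw [d1, d2, d3, d4, hc']
      ring
  · -- even case
    intro _
    refine ⟨fun x => ((m : ℤ) - 1) * v x - 2 * D x, ?_, ?_⟩
    · intro x hx
      simp only
      rw [hvN x hx, hDN x hx]
      ring
    · have s1 : delta m n (fun x => ((m : ℤ) - 1) * v x - 2 * D x) =
          fun x => delta m n (fun x => ((m : ℤ) - 1) * v x) x -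
            delta m n (fun x => 2 * D x) x :=
        delta_sub m n (fun x => ((m : ℤ) - 1) * v x) (fun x => 2 * D x)
      have s2 : delta m n (fun x => ((m : ℤ) - 1) * v x) =
          fun x => ((m : ℤ) - 1) * delta m n v x := delta_smul m n ((m : ℤ) - 1) v
      have s3 : delta m n (fun x => 2 * D x) = fun x => 2 * delta m n D x :=
        delta_smul m n 2 D
      funext x
      have d1 : delta m n (fun x => ((m : ℤ) - 1) * v x - 2 * D x) x =
          delta m n (fun x => ((m : ℤ) - 1) * v x) x - delta m n (fun x => 2 * D x) x :=
        congrFun s1 x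
      have d2 : delta m n (fun x => ((m : ℤ) - 1) * v x) x =
          ((m : ℤ) - 1) * delta m n v x := congrFun s2 x
      have d3 : delta m n (fun x => 2 * D x) x = 2 * delta m n D x := congrFun s3 x
      have d4 : delta m n v x = (m : ℤ) * ψ x := congrFun hδv x
      have d5 : delta m n D x =
          (∑ i ∈ Finset.range (m - 1), ((m - 1 - i : ℕ) : ℤ)) * ψ x - (m : ℤ) * f x :=
        congrFun hδD x
      rw [d1, d2, d3, d4, d5]
      linear_combination (-ψ x) * hg2
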